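/- Fix integers l ≥ 0, t with 0 ≤ t ≤ l, and s > l − t. Define C(s,k) = ∑_{i=max(0, l−s−k)}^{min(t, l−k)} a_{t,i}(q) q^{(k−i)(i−l+s+k)} [l−k choose i]_q [t−l+s+k choose t−i]_q, where a_{t,i}(q) = ∏_{0 ≤ j ≤ i−1} q^{l−t+1}/(q^{2(l−j)} − 1). Then C satisfies the recursion C(s+1, k) = (1/[s+1]) ( q^{2k−l} [t+s−l+k+1] C(s,k) + [l−k] C(s, k+1) ). -/

import Mathlib

/-!
Each summand of `C(s+1,k)` is matched with the summands of the same index `i` on the right: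
the absorption identity `[n] [n-1 choose j] = [n-j] [n choose j]`, applied to both Gaussian
binomials, reduces the termwise identity to the quantum-integer identity
`[m+n] = q^{-n} [m] + q^m [n]` with `m + n = s + 1`. The summation ranges can be widened to
`0 ≤ i ≤ t` because the Gaussian binomials vanish outside the original range.
-/

noncomputable section

/-- The field `ℚ(q)` of rational functions. -/
abbrev K : Type := RatFunc ℚ

/-- The indeterminate `q`. -/
def q : K := RatFunc.X

/-- The balanced quantum integer `[k] = (q^k - q^{-k})/(q - q⁻¹)`. -/
def qint (k : ℤ) : K := (q ^ k - q ^ (-k)) / (q - q⁻¹)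

/-- The quantum factorial `[k]! = [1][2]⋯[k]`. -/
def qfact : ℕ → K
  | 0 => 1
  | k + 1 => qfact k * qint ((k : ℤ) + 1)

/-- The Gaussian binomial coefficient `[c choose d] = [c]!/([c-d]![d]!)` for `c ≥ d ≥ 0`,
and `0` otherwise. -/
def qbinom (c d : ℤ) : K :=
  if d ≤ c ∧ 0 ≤ d then qfact c.toNat / (qfact (c - d).toNat * qfact d.toNat) else 0

/-- The coefficient `a_{t,i}(q) = ∏_{0 ≤ j ≤ i−1} q^{l−t+1}/(q^{2(l−j)} − 1)`,
with `a_{t,0} = 1`. -/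
def att (l t i : ℕ) : K :=
  ∏ j ∈ Finset.range i, q ^ ((l : ℤ) - t + 1) / (q ^ (2 * ((l : ℤ) - j)) - 1)

/-- `C(s,k) = ∑_{i=max(0,l−s−k)}^{min(t,l−k)} a_{t,i}(q) q^{(k−i)(i−l+s+k)}
[l−k choose i] [t−l+s+k choose t−i]`. -/
def Cfun (l t s k : ℕ) : K :=
  ∑ i ∈ Finset.Icc (max 0 ((l : ℤ) - s - k)) (min (t : ℤ) ((l : ℤ) - k)),
    att l t i.toNat * q ^ (((k : ℤ) - i) * (i - l + s + k)) *
      qbinom ((l : ℤ) - k) i * qbinom ((t : ℤ) - l + s + k) ((t : ℤ) - i)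

lemma q_ne_zero : q ≠ 0 := RatFunc.X_ne_zero

lemma q_zpow_ne_one {n : ℤ} (hn : n ≠ 0) : q ^ n ≠ 1 := by
  intro h
  wlog hpos : 0 < n generalizing n
  · exact this (neg_ne_zero.2 hn) (by rw [zpow_neg, h, inv_one]) (by omega)
  lift n to ℕ using hpos.le
  have hdeg := congrArg RatFunc.intDegree h
  rw [zpow_natCast, q, ← RatFunc.algebraMap_X, ← map_pow, RatFunc.intDegree_polynomial,
    Polynomial.natDegree_X_pow, RatFunc.intDegree_one] at hdeg
  omega

lemma q_zpow_sub_zpow_neg_ne_zero {n : ℤ} (hn : n ≠ 0) : q ^ n - q ^ (-n) ≠ 0 := by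
  intro h
  apply q_zpow_ne_one (show 2 * n ≠ 0 by omega)
  calc q ^ (2 * n) = q ^ n * q ^ (-n) := by
        rw [two_mul, zpow_add₀ q_ne_zero, sub_eq_zero.1 h]
    _ = 1 := by rw [← zpow_add₀ q_ne_zero, add_neg_cancel, zpow_zero]

lemma q_sub_q_inv_ne_zero : q - q⁻¹ ≠ 0 := by
  simpa using q_zpow_sub_zpow_neg_ne_zero one_ne_zero

lemma qint_ne_zero {n : ℤ} (hn : n ≠ 0) : qint n ≠ 0 :=
  div_ne_zero (q_zpow_sub_zpow_neg_ne_zero hn) q_sub_q_inv_ne_zero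

lemma qint_zero : qint 0 = 0 := by simp [qint]

lemma qint_add (m n : ℤ) : qint (m + n) = q ^ (-n) * qint m + q ^ m * qint n := by
  simp only [qint, ← mul_div_assoc, ← add_div, mul_sub, ← zpow_add₀ q_ne_zero]
  ring_nf

lemma qfact_ne_zero (n : ℕ) : qfact n ≠ 0 := by
  induction n with
  | zero => exact one_ne_zero
  | succ n ih => exact mul_ne_zero ih (qint_ne_zero (by omega))

lemma qfact_toNat {n : ℤ} (hn : 0 < n) : qfact n.toNat = qfact (n - 1).toNat * qint n := by
  obtain ⟨m, rfl⟩ : ∃ m : ℕ, n = m + 1 := ⟨(n - 1).toNat, by omega⟩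
  simp [qfact]

lemma qbinom_of_lt {c d : ℤ} (h : c < d) : qbinom c d = 0 :=
  if_neg (by omega)

lemma qbinom_of_neg {c d : ℤ} (h : d < 0) : qbinom c d = 0 :=
  if_neg (by omega)

lemma qint_mul_qbinom_sub_one (n j : ℤ) :
    qint n * qbinom (n - 1) j = qint (n - j) * qbinom n j := by
  rcases lt_or_ge j 0 with hj | hj
  · rw [qbinom_of_neg hj, qbinom_of_neg hj, mul_zero, mul_zero]
  rcases lt_trichotomy j n with hjn | rfl | hjn
  · rw [qbinom, qbinom, if_pos ⟨by omega, hj⟩, if_pos ⟨by omega, hj⟩,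
      qfact_toNat (show 0 < n by omega), qfact_toNat (show 0 < n - j by omega),
      show n - 1 - j = n - j - 1 by ring]
    field_simp [qfact_ne_zero, qint_ne_zero (show n - j ≠ 0 by omega)]
  · rw [qbinom_of_lt (by omega), sub_self, qint_zero, mul_zero, zero_mul]
  · rw [qbinom_of_lt (by omega), qbinom_of_lt hjn, mul_zero, mul_zero]

def Cterm (l t s k : ℕ) (i : ℤ) : K :=
  att l t i.toNat * q ^ (((k : ℤ) - i) * (i - l + s + k)) *
    qbinom ((l : ℤ) - k) i * qbinom ((t : ℤ) - l + s + k) ((t : ℤ) - i)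

lemma Cfun_eq_sum_Cterm (l t s k : ℕ) :
    Cfun l t s k = ∑ i ∈ Finset.Icc (0 : ℤ) t, Cterm l t s k i := by
  refine Finset.sum_subset (fun i hi => ?_) (fun i hi hi' => ?_)
  · simp only [Finset.mem_Icc] at hi ⊢
    omega
  · simp only [Finset.mem_Icc, not_and_or, not_le] at hi hi'
    rcases hi' with hlow | hhigh
    · change Cterm l t s k i = 0
      rw [Cterm, qbinom_of_lt (c := (t : ℤ) - l + s + k) (by omega), mul_zero]
    · change Cterm l t s k i = 0
      rw [Cterm, qbinom_of_lt (d := i) (by omega), mul_zero, zero_mul]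

lemma qint_mul_Cterm_succ (l t s k : ℕ) (i : ℤ) :
    qint ((s : ℤ) + 1) * Cterm l t (s + 1) k i
      = q ^ (2 * (k : ℤ) - l) * qint ((t : ℤ) + s - l + k + 1) * Cterm l t s k i
        + qint ((l : ℤ) - k) * Cterm l t s (k + 1) i := by
  set A := att l t i.toNat * q ^ (((k : ℤ) - i) * (i - l + s + k)) with hA
  set n : ℤ := (t : ℤ) - l + s + k + 1
  have hterm_s_succ : Cterm l t (s + 1) k i
      = A * q ^ ((k : ℤ) - i) * qbinom ((l : ℤ) - k) i * qbinom n (t - i) := by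
    rw [Cterm, hA, show ((k : ℤ) - i) * (i - l + (s + 1 : ℕ) + k)
        = ((k : ℤ) - i) * (i - l + s + k) + (k - i) by push_cast; ring,
      zpow_add₀ q_ne_zero, show (t : ℤ) - l + (s + 1 : ℕ) + k = n by push_cast; ring]
    ring
  have hterm : Cterm l t s k i = A * qbinom ((l : ℤ) - k) i * qbinom (n - 1) (t - i) := by
    rw [Cterm, show n - 1 = (t : ℤ) - l + s + k by ring]
  have hterm_k_succ : Cterm l t s (k + 1) i
      = A * q ^ ((s : ℤ) + 2 * k - l + 1) * qbinom ((l : ℤ) - k - 1) i * qbinom n (t - i) := by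
    rw [Cterm, hA, show ((k + 1 : ℕ) - i) * (i - l + s + (k + 1 : ℕ))
        = ((k : ℤ) - i) * (i - l + s + k) + (s + 2 * k - l + 1) by push_cast; ring,
      zpow_add₀ q_ne_zero, show (t : ℤ) - l + s + (k + 1 : ℕ) = n by push_cast; ring,
      show (l : ℤ) - (k + 1 : ℕ) = l - k - 1 by push_cast; ring]
    ring
  have habs₁ :
      qint n * qbinom (n - 1) (t - i) = qint ((s : ℤ) + k - l + i + 1) * qbinom n (t - i) := by
    rw [qint_mul_qbinom_sub_one, show n - (t - i) = (s : ℤ) + k - l + i + 1 by ring]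
  have habs₂ := qint_mul_qbinom_sub_one ((l : ℤ) - k) i
  have hsplit : q ^ ((k : ℤ) - i) * qint ((s : ℤ) + 1)
      = q ^ (2 * (k : ℤ) - l) * qint ((s : ℤ) + k - l + i + 1)
        + q ^ ((s : ℤ) + 2 * k - l + 1) * qint ((l : ℤ) - k - i) := by
    rw [show (s : ℤ) + 1 = ((s : ℤ) + k - l + i + 1) + (l - k - i) by ring, qint_add, mul_add,
      ← mul_assoc, ← mul_assoc, ← zpow_add₀ q_ne_zero, ← zpow_add₀ q_ne_zero]
    ring_nf
  rw [show (t : ℤ) + s - l + k + 1 = n by ring, hterm_s_succ, hterm, hterm_k_succ]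
  linear_combination A * qbinom ((l : ℤ) - k) i * qbinom n (t - i) * hsplit
    - q ^ (2 * (k : ℤ) - l) * A * qbinom ((l : ℤ) - k) i * habs₁
    - A * q ^ ((s : ℤ) + 2 * k - l + 1) * qbinom n (t - i) * habs₂

theorem Cfun_recursion_general (l t s : ℕ) (k : ℕ) :
    Cfun l t (s + 1) k
      = (qint ((s : ℤ) + 1))⁻¹ *
          (q ^ (2 * (k : ℤ) - l) * qint ((t : ℤ) + s - l + k + 1) * Cfun l t s k
            + qint ((l : ℤ) - k) * Cfun l t s (k + 1)) := by
  rw [inv_mul_eq_div, eq_div_iff (qint_ne_zero (by omega)), Cfun_eq_sum_Cterm,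
    Cfun_eq_sum_Cterm, Cfun_eq_sum_Cterm, Finset.sum_mul, Finset.mul_sum, Finset.mul_sum,
    ← Finset.sum_add_distrib]
  exact Finset.sum_congr rfl fun i _ => (mul_comm _ _).trans (qint_mul_Cterm_succ l t s k i)

/-- The recursion
`C(s+1,k) = (1/[s+1]) ( q^{2k−l} [t+s−l+k+1] C(s,k) + [l−k] C(s,k+1) )`,
for `0 ≤ t ≤ l` and `s > l − t`. -/
theorem Cfun_recursion (l t s : ℕ) (ht : t ≤ l) (hs : (l : ℤ) - t < s) (k : ℕ) :
    Cfun l t (s + 1) k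
      = (qint ((s : ℤ) + 1))⁻¹ *
          (q ^ (2 * (k : ℤ) - l) * qint ((t : ℤ) + s - l + k + 1) * Cfun l t s k
            + qint ((l : ℤ) - k) * Cfun l t s (k + 1)) :=
  Cfun_recursion_general l t s k

end
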